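/- The formal power series identity B_{2,2}(q) = ∏_{m≥3}(1+q^m) · (q² + 2q³ + q⁴ + q⁵ + q⁶)/(1−q²) holds, where B_{2,2}(q) = ∑ b_{2,2}(n) qⁿ. -/

import Mathlib

open Finset PowerSeries

/-- The list of hook lengths of the Young diagram of a partition whose row
lengths (in nonincreasing order) are given by the list `l`.  The box in row `i`,
column `j` (both 0-indexed) has hook length `(l_i - j) + #{i' > i : j < l_{i'}}`. -/
def hookCount (l : List ℕ) (k : ℕ) : ℕ :=
  ((Finset.range l.length ×ˢ Finset.range (l.getD 0 0)).filter
    (fun p => p.2 < l.getD p.1 0 ∧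
      (l.getD p.1 0 - p.2) +
        ((List.range l.length).filter (fun i' => p.1 < i' ∧ p.2 < l.getD i' 0)).length = k)).card

/-- `b t k n` : the total number of boxes with hook length `k` among the Young
diagrams of all `t`-regular partitions of `n`. -/
def b (t k n : ℕ) : ℕ :=
  ∑ p ∈ Finset.univ.filter (fun p : n.Partition => ∀ i ∈ p.parts, ¬ t ∣ i),
    hookCount ((p.parts.sort (· ≤ ·)).reverse) k

/-!
In a partition into odd parts, a box has hook length 2 exactly when it is either the
second-to-last box of the last row of length `v`, for a part size `v ≥ 3`, or the last box of
the second-to-last row of length `v`, for a part size `v` occurring at least twice. Deleting the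
part `v`, resp. the pair `v, v`, is a bijection onto the partitions of `n - v`, resp. `n - 2v`,
into odd parts, so `B_{2,2}(q) = P_odd(q) (q³/(1-q²) + q²/(1-q⁴))`. By Euler's theorem
`P_odd(q) = ∏_{m≥1} (1 + q^m)`, and `(1+q)(1+q²)(q³/(1-q²) + q²/(1-q⁴))` is the rational
function of the statement.
-/

theorem List.length_filter_range_getD (t : List ℕ) (q : ℕ → Bool) :
    ((List.range t.length).filter (fun i => q (t.getD i 0))).length = t.countP q := by
  induction t with
  | nil => simp
  | cons a t ih =>
    rw [List.length_cons, List.range_succ_eq_map, List.countP_cons]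
    simp only [List.filter_cons, List.getD_cons_zero, List.filter_map]
    cases q a <;> simp [Function.comp_def, ← ih]

theorem List.length_filter_range_getD_cons (v : ℕ) (t : List ℕ) (q : ℕ → ℕ → Prop)
    [∀ i x, Decidable (q i x)] :
    ((List.range (t.length + 1)).filter (fun i => q i ((v :: t).getD i 0))).length =
      (if q 0 v then 1 else 0) +
        ((List.range t.length).filter (fun i => q (i + 1) (t.getD i 0))).length := by
  rw [List.range_succ_eq_map, List.filter_cons, List.filter_map, List.getD_cons_zero]
  by_cases h : q 0 v <;> simp [h, Function.comp_def, add_comm]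

theorem List.getD_le_getD_zero {l : List ℕ} (hl : l.Pairwise (· ≥ ·)) (i : ℕ) :
    l.getD i 0 ≤ l.getD 0 0 := by
  rcases l with _ | ⟨a, s⟩
  · simp
  rcases i with _ | i
  · rfl
  rw [List.getD_cons_succ, List.getD_cons_zero, List.getD_eq_getElem?_getD]
  cases h : s[i]? with
  | none => simp
  | some x => exact List.rel_of_pairwise_cons hl (List.mem_of_getElem? h)

theorem length_filter_legs_cons_zero (v j : ℕ) (t : List ℕ) :
    ((List.range (t.length + 1)).filter (fun i => 0 < i ∧ j < (v :: t).getD i 0)).length =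
      t.countP (j < ·) := by
  rw [List.length_filter_range_getD_cons v t (fun i x => 0 < i ∧ j < x)]
  simpa using List.length_filter_range_getD t (j < ·)

theorem length_filter_legs_cons_succ (v a j : ℕ) (t : List ℕ) :
    ((List.range (t.length + 1)).filter (fun i => a + 1 < i ∧ j < (v :: t).getD i 0)).length =
      ((List.range t.length).filter (fun i => a < i ∧ j < t.getD i 0)).length := by
  rw [List.length_filter_range_getD_cons v t (fun i x => a + 1 < i ∧ j < x)]
  simp

theorem hookCount_cons (v : ℕ) (t : List ℕ) (k : ℕ) (hl : (v :: t).Pairwise (· ≥ ·)) :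
    hookCount (v :: t) k = #{j ∈ range v | v - j + t.countP (j < ·) = k} + hookCount t k := by
  simp only [hookCount, card_filter, sum_product, List.length_cons, sum_range_succ',
    length_filter_legs_cons_zero, length_filter_legs_cons_succ, List.getD_cons_zero,
    List.getD_cons_succ]
  rw [add_comm]
  congr 1
  · exact sum_congr rfl fun j hj => by simp [mem_range.mp hj]
  · refine sum_congr rfl fun i _ => (sum_subset ?_ fun j _ hj => if_neg ?_).symm
    · exact range_subset_range.mpr (by simpa using List.getD_le_getD_zero hl 1)
    · have := List.getD_le_getD_zero hl.of_cons i
      simp only [mem_range] at hj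
      omega

theorem card_row_hook_eq_two {v : ℕ} {t : List ℕ} (hv : ¬2 ∣ v)
    (ht : ∀ x ∈ t, x ≤ v ∧ ¬2 ∣ x) :
    #{j ∈ range v | v - j + t.countP (j < ·) = 2} =
      (if t.count v = 1 then 1 else 0) + if t.count v = 0 ∧ 3 ≤ v then 1 else 0 := by
  -- the parts are odd and at most `v`, so `v` is the only one that can exceed `v - 2`
  have legs_eq_count (j : ℕ) (hj : v - 2 ≤ j) (hjv : j < v) : t.countP (j < ·) = t.count v := by
    rw [List.count, List.countP_congr]
    intro x hx
    have := ht x hx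
    simp only [decide_eq_true_eq, beq_iff_eq]
    omega
  have hfilter : {j ∈ range v | v - j + t.countP (j < ·) = 2} =
      {j ∈ range v | v - j + t.count v = 2} := by
    refine filter_congr fun j hjv => ?_
    by_cases hj : v - 2 ≤ j
    · rw [legs_eq_count j hj (mem_range.mp hjv)]
    · omega
  rw [hfilter]
  generalize t.count v = c
  have : {j ∈ range v | v - j + c = 2} =
      if c = 1 then {v - 1} else if c = 0 ∧ 3 ≤ v then {v - 2} else ∅ := by
    ext j
    split_ifs <;> simp <;> omega
  rw [this]
  split_ifs <;> simp_all

theorem hookCount_two_eq_sum {l : List ℕ} (hl : l.Pairwise (· ≥ ·)) (hodd : ∀ x ∈ l, ¬2 ∣ x)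
    {S : Finset ℕ} (hS : ∀ x ∈ l, x ∈ S) :
    hookCount l 2 =
      ∑ w ∈ S, ((if 1 ≤ l.count w ∧ 3 ≤ w then 1 else 0) + if 2 ≤ l.count w then 1 else 0) := by
  induction l with
  | nil => simp [hookCount]
  | cons v t ih =>
    have ht : ∀ x ∈ t, x ≤ v ∧ ¬2 ∣ x := fun x hx =>
      ⟨List.rel_of_pairwise_cons hl hx, hodd x (List.mem_cons_of_mem v hx)⟩
    have count_cons (w : ℕ) :
        ((if 1 ≤ (v :: t).count w ∧ 3 ≤ w then 1 else 0) +
            if 2 ≤ (v :: t).count w then 1 else 0) =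
          ((if 1 ≤ t.count w ∧ 3 ≤ w then 1 else 0) + (if 2 ≤ t.count w then 1 else 0)) +
            if w = v then
              (if t.count v = 1 then 1 else 0) + if t.count v = 0 ∧ 3 ≤ v then 1 else 0
            else 0 := by
      rw [List.count_cons]
      by_cases h : w = v
      · subst h
        simp only [beq_self_eq_true, if_true]
        split_ifs <;> omega
      · simp [Ne.symm h, h]
    rw [hookCount_cons v t 2 hl, card_row_hook_eq_two (hodd v List.mem_cons_self) ht,
      sum_congr rfl fun w _ => count_cons w, sum_add_distrib, sum_ite_eq' S v,
      if_pos (hS v List.mem_cons_self), add_comm,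
      ih hl.of_cons (fun x hx => hodd x (List.mem_cons_of_mem v hx))
        (fun x hx => hS x (List.mem_cons_of_mem v hx))]

theorem hookCount_two_sort_parts_eq_sum {n : ℕ} (p : n.Partition) (hp : ∀ i ∈ p.parts, ¬2 ∣ i) :
    hookCount (p.parts.sort (· ≤ ·)).reverse 2 =
      ∑ w ∈ range (n + 1), ((if 1 ≤ p.parts.count w ∧ 3 ≤ w then 1 else 0) +
        if 2 ≤ p.parts.count w then 1 else 0) := by
  have mem_iff (x : ℕ) : x ∈ (p.parts.sort (· ≤ ·)).reverse ↔ x ∈ p.parts := by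
    rw [List.mem_reverse, Multiset.mem_sort]
  have count_eq (w : ℕ) : (p.parts.sort (· ≤ ·)).reverse.count w = p.parts.count w := by
    rw [List.count_reverse, ← Multiset.coe_count, Multiset.sort_eq]
  simp_rw [← count_eq]
  exact hookCount_two_eq_sum (List.pairwise_reverse.mpr (Multiset.pairwise_sort _ _))
    (fun x hx => hp x ((mem_iff x).mp hx))
    (fun x hx => mem_range.mpr
      (Nat.lt_succ_of_le (Nat.Partition.le_of_mem_parts ((mem_iff x).mp hx))))

namespace Nat.Partition

theorem sum_le_of_le_parts {n : ℕ} (p : n.Partition) {m : Multiset ℕ} (h : m ≤ p.parts) :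
    m.sum ≤ n := by
  obtain ⟨u, hu⟩ := Multiset.le_iff_exists_add.mp h
  have := p.parts_sum
  rw [hu, Multiset.sum_add] at this
  omega

theorem card_filter_le_parts_restricted (P : ℕ → Prop) [DecidablePred P] {n : ℕ}
    {m : Multiset ℕ} (hP : ∀ x ∈ m, P x) (hpos : ∀ x ∈ m, 0 < x) (hn : m.sum ≤ n) :
    #{p ∈ restricted n P | m ≤ p.parts} = #(restricted (n - m.sum) P) := by
  have le_of_mem {p : n.Partition} (hp : p ∈ {p ∈ restricted n P | m ≤ p.parts}) : m ≤ p.parts :=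
    (mem_filter.mp hp).2
  refine card_bij' (fun p hp => ⟨p.parts - m, fun hi => p.parts_pos (Multiset.mem_of_le
      (Multiset.sub_le_self _ _) hi), ?_⟩) (fun q _ => ⟨q.parts + m, ?_, ?_⟩) ?_ ?_ ?_ ?_
  · have := congrArg Multiset.sum (tsub_add_cancel_of_le (le_of_mem hp))
    rw [Multiset.sum_add, p.parts_sum] at this
    omega
  · intro i hi
    exact (Multiset.mem_add.mp hi).elim q.parts_pos (hpos i)
  · rw [Multiset.sum_add, q.parts_sum]
    omega
  · intro p hp
    simp only [restricted, mem_filter, mem_univ, true_and] at hp ⊢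
    exact fun i hi => hp.1 i (Multiset.mem_of_le (Multiset.sub_le_self _ _) hi)
  · intro q hq
    simp only [restricted, mem_filter, mem_univ, true_and] at hq ⊢
    exact ⟨fun i hi => (Multiset.mem_add.mp hi).elim (hq i) (hP i), Multiset.le_add_left _ _⟩
  · exact fun p hp => Nat.Partition.ext (tsub_add_cancel_of_le (le_of_mem hp))
  · exact fun q _ => Nat.Partition.ext (add_tsub_cancel_right _ _)

theorem card_filter_le_count_restricted (P : ℕ → Prop) [DecidablePred P] (n : ℕ) {k : ℕ}
    (hk : 0 < k) (w : ℕ) :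
    #{p ∈ restricted n P | k ≤ p.parts.count w} =
      if 0 < w ∧ P w ∧ k * w ≤ n then #(restricted (n - k * w) P) else 0 := by
  simp_rw [Multiset.le_count_iff_replicate_le]
  split_ifs with h
  · obtain ⟨hw, hPw, hn⟩ := h
    have hsum : (Multiset.replicate k w).sum = k * w := by simp
    rw [card_filter_le_parts_restricted P (fun x hx => Multiset.eq_of_mem_replicate hx ▸ hPw)
      (fun x hx => Multiset.eq_of_mem_replicate hx ▸ hw) (hsum ▸ hn), hsum]
  · refine Finset.card_eq_zero.mpr (filter_eq_empty_iff.mpr fun p hp hle => h ?_)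
    have hmem : w ∈ p.parts := Multiset.mem_of_le hle (Multiset.mem_replicate.mpr ⟨hk.ne', rfl⟩)
    refine ⟨p.parts_pos hmem, (mem_filter.mp hp).2 w hmem, ?_⟩
    simpa using p.sum_le_of_le_parts hle

end Nat.Partition

theorem Finset.sum_range_ite_mod_four_eq_two {M : Type*} [AddCommMonoid M] (n : ℕ) (f : ℕ → M) :
    ∑ j ∈ range (n + 1), (if j % 4 = 2 then f j else 0) =
      ∑ w ∈ range (n + 1), if ¬2 ∣ w ∧ 2 * w ≤ n then f (2 * w) else 0 := by
  rw [← sum_filter, ← sum_filter]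
  refine sum_nbij' (· / 2) (2 * ·) ?_ ?_ ?_ ?_ fun j hj => congrArg f ?_ <;>
    simp only [mem_filter, mem_range] at * <;> omega

theorem b_two_two_eq_sum_card (n : ℕ) :
    b 2 2 n = ∑ w ∈ range (n + 1),
      ((if 3 ≤ w then #{p ∈ Nat.Partition.restricted n (¬2 ∣ ·) | 1 ≤ p.parts.count w} else 0) +
        #{p ∈ Nat.Partition.restricted n (¬2 ∣ ·) | 2 ≤ p.parts.count w}) := by
  change ∑ p ∈ Nat.Partition.restricted n (¬2 ∣ ·), _ = _
  rw [sum_congr (s₁ := Nat.Partition.restricted n (¬2 ∣ ·)) rfl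
    fun p hp => hookCount_two_sort_parts_eq_sum p (mem_filter.mp hp).2, sum_comm]
  refine sum_congr rfl fun w _ => ?_
  rw [sum_add_distrib, card_filter, card_filter]
  split_ifs with h3 <;> simp [h3]

/-- The coefficient of `q ^ j` in `q ^ 3 / (1 - q ^ 2) + q ^ 2 / (1 - q ^ 4)`. -/
def hookTwoWeight (j : ℕ) : ℕ :=
  (if ¬2 ∣ j ∧ 3 ≤ j then 1 else 0) + if j % 4 = 2 then 1 else 0

theorem b_two_two_eq_sum_hookTwoWeight_mul (n : ℕ) :
    b 2 2 n =
      ∑ j ∈ range (n + 1), hookTwoWeight j * #(Nat.Partition.restricted (n - j) (¬2 ∣ ·)) := by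
  simp only [b_two_two_eq_sum_card, Nat.Partition.card_filter_le_count_restricted _ n one_pos,
    Nat.Partition.card_filter_le_count_restricted _ n two_pos, hookTwoWeight, add_mul,
    sum_add_distrib, ite_mul, one_mul, zero_mul, sum_range_ite_mod_four_eq_two]
  congr 1 <;> refine sum_congr rfl fun w hw => ?_ <;> have := mem_range.mp hw <;>
    split_ifs <;> first | rfl | omega | rw [one_mul]

theorem hookTwoWeight_eq (j : ℕ) :
    hookTwoWeight j = (if 4 ≤ j then hookTwoWeight (j - 4) else 0) +
      (if j = 2 then 1 else 0) + (if j = 3 then 1 else 0) + if j = 5 then 1 else 0 := by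
  unfold hookTwoWeight
  split_ifs <;> omega

theorem one_sub_X_pow_four_mul_mk_hookTwoWeight {R : Type*} [CommRing R] :
    (1 - X ^ 4 : R⟦X⟧) * mk (fun j => (hookTwoWeight j : R)) = X ^ 2 + X ^ 3 + X ^ 5 := by
  ext j
  simp only [sub_mul, one_mul, map_sub, map_add, coeff_mk, coeff_X_pow_mul', coeff_X_pow]
  rw [hookTwoWeight_eq j]
  push_cast
  ring

section PiTopology

open PowerSeries.WithPiTopology Filter

theorem PowerSeries.coeff_eq_coeff_prod_range_of_hasProd {R : Type*} [CommRing R]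
    [TopologicalSpace R] [T2Space R] {f : ℕ → R⟦X⟧} {a : R⟦X⟧} (h : HasProd f a) {k M : ℕ}
    (hf : ∀ i, M ≤ i → ↑k < (1 - f i).order) :
    coeff k a = coeff k (∏ i ∈ range M, f i) := by
  refine tendsto_nhds_unique (((continuous_coeff R k).tendsto a).comp h)
    (tendsto_const_nhds.congr' ?_)
  filter_upwards [eventually_ge_atTop (range M)] with s hs
  have hsd : ∀ i ∈ s \ range M, ↑k < (1 - f i).order := fun i hi =>
    hf i (by simpa using (mem_sdiff.mp hi).2)
  have := coeff_mul_prod_one_sub_of_lt_order k _ (∏ i ∈ range M, f i) _ hsd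
  simp only [sub_sub_cancel] at this
  rw [Function.comp_apply, ← prod_sdiff hs, mul_comm, this]

theorem coeff_prod_range_one_add_X_pow_of_le {R : Type*} [CommRing R] {k M : ℕ} (hk : k ≤ M) :
    coeff k (∏ i ∈ range M, (1 + X ^ (i + 1) : R⟦X⟧)) =
      #(Nat.Partition.countRestricted k 2) := by
  nontriviality R
  -- any topology on `R` will do to use the product formula; take the discrete one
  let _ : TopologicalSpace R := ⊥
  have _ : DiscreteTopology R := ⟨rfl⟩
  have two_terms (i : ℕ) : ∑ j ∈ range 2, (X : R⟦X⟧) ^ ((i + 1) * j) = 1 + X ^ (i + 1) := by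
    simp [sum_range_succ]
  have h := Nat.Partition.hasProd_powerSeriesMk_card_countRestricted R two_pos
  simp only [two_terms] at h
  rw [← coeff_eq_coeff_prod_range_of_hasProd h, coeff_mk]
  intro i hi
  rw [sub_add_cancel_left, order_neg, order_X_pow]
  exact_mod_cast Nat.lt_succ_of_le (hk.trans hi)

end PiTopology

theorem coeff_mul_mk_card_countRestricted_two {R : Type*} [CommRing R] (φ : R⟦X⟧) {n M : ℕ}
    (hn : n ≤ M) :
    coeff n (φ * mk fun k => (#(Nat.Partition.countRestricted k 2) : R)) =
      coeff n (φ * ∏ i ∈ range M, (1 + X ^ (i + 1))) := by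
  simp only [coeff_mul]
  refine sum_congr rfl fun x hx => ?_
  rw [coeff_mk,
    coeff_prod_range_one_add_X_pow_of_le ((HasAntidiagonal.antidiagonal.snd_le hx).trans hn)]

theorem b_two_two_eq_coeff_mul (n : ℕ) :
    (b 2 2 n : ℚ) = coeff n (mk (fun j => (hookTwoWeight j : ℚ)) *
      mk fun k => (#(Nat.Partition.countRestricted k 2) : ℚ)) := by
  rw [b_two_two_eq_sum_hookTwoWeight_mul, coeff_mul, Nat.sum_antidiagonal_eq_sum_range_succ
    (fun i j => coeff i (mk fun j => (hookTwoWeight j : ℚ)) * coeff j _)]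
  simp only [Nat.Partition.card_restricted_eq_card_countRestricted _ two_pos, coeff_mk]
  push_cast
  rfl

theorem stmt13 : ∀ n : ℕ,
    (PowerSeries.coeff (R := ℚ) n) (PowerSeries.mk fun m => (b 2 2 m : ℚ)) =
      (PowerSeries.coeff (R := ℚ) n)
        ((∏ m ∈ Finset.range (n + 1), (1 + (X : ℚ⟦X⟧) ^ (m + 3))) *
          (X ^ 2 + 2 * X ^ 3 + X ^ 4 + X ^ 5 + X ^ 6) * (1 - X ^ 2)⁻¹) := by
  intro n
  set G : ℚ⟦X⟧ := mk fun j => (hookTwoWeight j : ℚ)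
  have hG : (1 + X) * (1 + X ^ 2) * G =
      (X ^ 2 + 2 * X ^ 3 + X ^ 4 + X ^ 5 + X ^ 6) * (1 - X ^ 2)⁻¹ := by
    rw [PowerSeries.eq_mul_inv_iff_mul_eq (by simp),
      show (1 + X) * (1 + X ^ 2) * G * (1 - X ^ 2) = (1 + X) * ((1 - X ^ 4) * G) by ring,
      one_sub_X_pow_four_mul_mk_hookTwoWeight]
    ring
  have hprod : ∏ i ∈ range (n + 3), (1 + X ^ (i + 1) : ℚ⟦X⟧) =
      (1 + X) * (1 + X ^ 2) * ∏ m ∈ range (n + 1), (1 + X ^ (m + 3)) := by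
    rw [prod_range_succ', prod_range_succ']
    ring
  rw [coeff_mk, b_two_two_eq_coeff_mul, coeff_mul_mk_card_countRestricted_two G (n.le_add_right 3),
    hprod, mul_assoc _ _ (1 - X ^ 2)⁻¹, ← hG]
  ring_nf
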